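/- Let 1 < M ≤ d+1 and τ > 0. Define the mini-batch DCL loss L(U,V) = (1/M) Σ_{i=1}^M −log( exp(u_i·v_i/τ) / ( Σ_{j≠i} exp(u_i·v_j/τ) + Σ_{j≠i} exp(u_i·u_j/τ) ) ) for M-tuples U, V of unit vectors in ℝ^d, and its symmetric version L_sym(U,V) = ½(L(U,V) + L(V,U)). Then L_sym is minimized over all such (U,V) exactly at the configurations with u_i = v_i for all i and ⟨u_i, u_j⟩ = −1/(M−1) for all i ≠ j; these are the unique minimizers. -/

import Mathlib

open scoped BigOperators RealInnerProductSpace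

noncomputable section

/-- Mini-batch DCL (decoupled contrastive learning) loss with temperature `τ`: the
positive term is removed from the denominator, which contains both views' negatives. -/
def Ldcl (d M : ℕ) (τ : ℝ)
    (U V : Fin M → EuclideanSpace ℝ (Fin d)) : ℝ :=
  (1 / (M : ℝ)) * ∑ i, -Real.log
    (Real.exp (⟪U i, V i⟫ / τ) /
      ((∑ j ∈ Finset.univ.erase i, Real.exp (⟪U i, V j⟫ / τ)) +
        ∑ j ∈ Finset.univ.erase i, Real.exp (⟪U i, U j⟫ / τ)))

/-- Symmetrised DCL loss. -/
def LdclSym (d M : ℕ) (τ : ℝ)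
    (U V : Fin M → EuclideanSpace ℝ (Fin d)) : ℝ :=
  (Ldcl d M τ U V + Ldcl d M τ V U) / 2

/-!
For an anchor `u_i`, the denominator of its DCL term is a sum of `2(M-1)` exponentials, so by
convexity of `exp` its logarithm is at least `log (2(M-1))` plus the mean exponent. Summing over
both views, the mean exponents add up to `(‖∑ (u_i + v_i)‖² - ∑ ‖u_i + v_i‖²) / τ`, and for unit
vectors `‖u_i + v_i‖² = 2 + 2 u_i·v_i`. With `L* = log (2(M-1)) - 1/τ - 1/((M-1)τ)` (`dclMin`),
this turns `2M (L_sym - L*)` into a sum of four nonnegative terms: the two families of Jensen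
gaps, `‖∑ (u_i + v_i)‖² / (2(M-1)τ)`, and a positive multiple of `M - ∑ u_i·v_i`. All four
vanish exactly when `u_i = v_i`, `∑ u_i = 0` and, for each `i`, the products `u_i·u_j` with
`j ≠ i` are equal (hence equal to `-1/(M-1)`), i.e. at a regular simplex, which exists in `ℝ^d`
because `M ≤ d + 1`.
-/

open Finset Real Module

section LogSumExp

variable {ι : Type*} (s : Finset ι) (x : ι → ℝ)

lemma exp_mul_one_add_sub_le_exp (m t : ℝ) : exp m * (1 + (t - m)) ≤ exp t := by
  have := mul_le_mul_of_nonneg_left (add_one_le_exp (t - m)) (exp_nonneg m)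
  rwa [← exp_add, add_sub_cancel, add_comm (t - m)] at this

lemma exp_mul_one_add_sub_lt_exp {m t : ℝ} (h : t ≠ m) : exp m * (1 + (t - m)) < exp t := by
  have := mul_lt_mul_of_pos_left (add_one_lt_exp (sub_ne_zero.2 h)) (exp_pos m)
  rwa [← exp_add, add_sub_cancel, add_comm (t - m)] at this

def logSumExpGap : ℝ := log (∑ k ∈ s, exp (x k)) - log #s - (∑ k ∈ s, x k) / #s

lemma sum_exp_sub_card_mul_exp_mean (hs : s.Nonempty) :
    ∑ k ∈ s, exp (x k) - #s * exp ((∑ k ∈ s, x k) / #s) =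
      ∑ k ∈ s, (exp (x k) - exp ((∑ k ∈ s, x k) / #s) * (1 + (x k - (∑ k ∈ s, x k) / #s))) := by
  have hs : (#s : ℝ) ≠ 0 := by exact_mod_cast hs.card_pos.ne'
  simp only [sum_sub_distrib, ← mul_sum, sum_add_distrib, sum_const, nsmul_eq_mul, mul_one]
  field_simp
  ring

lemma card_mul_exp_mean_le_sum_exp (hs : s.Nonempty) :
    #s * exp ((∑ k ∈ s, x k) / #s) ≤ ∑ k ∈ s, exp (x k) := by
  have := sum_nonneg fun k (_ : k ∈ s) =>
    sub_nonneg.2 (exp_mul_one_add_sub_le_exp ((∑ k ∈ s, x k) / #s) (x k))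
  linarith [sum_exp_sub_card_mul_exp_mean s x hs]

lemma logSumExpGap_eq (hs : s.Nonempty) :
    logSumExpGap s x = log (∑ k ∈ s, exp (x k)) - log (#s * exp ((∑ k ∈ s, x k) / #s)) := by
  have hs : (#s : ℝ) ≠ 0 := by exact_mod_cast hs.card_pos.ne'
  rw [logSumExpGap, log_mul hs (exp_ne_zero _), log_exp]
  ring

lemma logSumExpGap_nonneg (hs : s.Nonempty) : 0 ≤ logSumExpGap s x := by
  rw [logSumExpGap_eq s x hs, sub_nonneg]
  have : (0 : ℝ) < #s := by exact_mod_cast hs.card_pos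
  exact log_le_log (by positivity) (card_mul_exp_mean_le_sum_exp s x hs)

lemma eq_mean_of_logSumExpGap_eq_zero (hs : s.Nonempty) (h : logSumExpGap s x = 0) :
    ∀ k ∈ s, x k = (∑ k ∈ s, x k) / #s := by
  set m := (∑ k ∈ s, x k) / #s
  have hcard : (0 : ℝ) < #s := by exact_mod_cast hs.card_pos
  have hsum : ∑ k ∈ s, exp (x k) = #s * exp m := by
    rw [logSumExpGap_eq s x hs, sub_eq_zero] at h
    exact log_injOn_pos (sum_pos (fun k _ => exp_pos _) hs) (mul_pos hcard (exp_pos m)) h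
  have hzero : ∑ k ∈ s, (exp (x k) - exp m * (1 + (x k - m))) = 0 := by
    rw [← sum_exp_sub_card_mul_exp_mean s x hs, hsum, sub_self]
  rw [sum_eq_zero_iff_of_nonneg fun j _ => sub_nonneg.2 (exp_mul_one_add_sub_le_exp m (x j))]
    at hzero
  intro k hk
  by_contra hne
  exact (sub_pos.2 (exp_mul_one_add_sub_lt_exp hne)).ne' (hzero k hk)

end LogSumExp

section InnerProduct

variable {E : Type*} [NormedAddCommGroup E] [InnerProductSpace ℝ E] {ι : Type*} [Fintype ι]

lemma sum_inner_sum_erase [DecidableEq ι] (w : ι → E) :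
    ∑ i, ⟪w i, ∑ j ∈ univ.erase i, w j⟫ = ‖∑ i, w i‖ ^ 2 - ∑ i, ‖w i‖ ^ 2 := by
  simp only [sum_erase_eq_sub (mem_univ _), inner_sub_right, real_inner_self_eq_norm_sq,
    sum_sub_distrib, ← sum_inner]

lemma inner_sum_erase_eq_neg_one [DecidableEq ι] {U : ι → E} (hU : ∀ i, ‖U i‖ = 1)
    (hsum : ∑ j, U j = 0) (i : ι) : ⟪U i, ∑ j ∈ univ.erase i, U j⟫ = -1 := by
  rw [sum_erase_eq_sub (mem_univ _), hsum, zero_sub, inner_neg_right,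
    real_inner_self_eq_norm_sq, hU i, one_pow]

lemma sum_inner_le_card {U V : ι → E} (hU : ∀ i, ‖U i‖ = 1) (hV : ∀ i, ‖V i‖ = 1) :
    ∑ i, ⟪U i, V i⟫ ≤ Fintype.card ι := by
  simpa using sum_le_sum fun i (_ : i ∈ univ) => real_inner_le_one_of_norm_eq_one (hU i) (hV i)

lemma eq_of_sum_inner_eq_card {U V : ι → E} (hU : ∀ i, ‖U i‖ = 1) (hV : ∀ i, ‖V i‖ = 1)
    (h : ∑ i, ⟪U i, V i⟫ = Fintype.card ι) (i : ι) : U i = V i := by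
  have hzero : ∑ j, (1 - ⟪U j, V j⟫) = 0 := by
    rw [sum_sub_distrib, h]
    simp
  rw [sum_eq_zero_iff_of_nonneg fun j _ =>
    sub_nonneg.2 (real_inner_le_one_of_norm_eq_one (hU j) (hV j))] at hzero
  exact (inner_eq_one_iff_of_norm_eq_one (hU i) (hV i)).1
    (sub_eq_zero.1 (hzero i (mem_univ i))).symm

lemma exists_linearIsometry_of_finrank_le {F : Type*} [NormedAddCommGroup F]
    [InnerProductSpace ℝ F] [FiniteDimensional ℝ F] [FiniteDimensional ℝ E]
    (h : finrank ℝ F ≤ finrank ℝ E) : Nonempty (F →ₗᵢ[ℝ] E) := by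
  let b := stdOrthonormalBasis ℝ F
  let c := stdOrthonormalBasis ℝ E
  let f : F →ₗ[ℝ] E := b.toBasis.constr ℝ fun k => c (Fin.castLE h k)
  have hf : Orthonormal ℝ (f ∘ b.toBasis) := by
    have : f ∘ b.toBasis = c ∘ Fin.castLE h := by
      funext k
      simp [f]
    rw [this]
    exact c.orthonormal.comp _ (Fin.castLE_injective h)
  exact ⟨f.isometryOfOrthonormal b.orthonormal hf⟩

lemma exists_regular_simplex [FiniteDimensional ℝ E] {M : ℕ} (hM : 1 < M)
    (hME : M ≤ finrank ℝ E + 1) :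
    ∃ W : Fin M → E, (∀ i, ‖W i‖ = 1) ∧ ∀ i j, i ≠ j → ⟪W i, W j⟫ = -1 / ((M : ℝ) - 1) := by
  have hM' : (1 : ℝ) < M := by exact_mod_cast hM
  have hM1 : (M : ℝ) - 1 ≠ 0 := by linarith
  let e : Fin M → EuclideanSpace ℝ (Fin M) := fun i => EuclideanSpace.single i 1
  let o : EuclideanSpace ℝ (Fin M) := ∑ i, e i
  have he : ∀ i j, ⟪e i, e j⟫ = if i = j then 1 else 0 := fun i j => by
    simp [e, EuclideanSpace.inner_single_left]
  have heo : ∀ i, ⟪e i, o⟫ = 1 := fun i => by simp [o, inner_sum, he]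
  have hoe : ∀ i, ⟪o, e i⟫ = 1 := fun i => by rw [real_inner_comm, heo]
  have hoo : ⟪o, o⟫ = M := (sum_inner univ e o).trans (by simp [heo])
  -- the centred basis vectors `e i - o / M` form a regular simplex in the hyperplane `oᗮ`
  let y : Fin M → EuclideanSpace ℝ (Fin M) := fun i => e i - (M : ℝ)⁻¹ • o
  have hy : ∀ i j, ⟪y i, y j⟫ = (if i = j then 1 else 0) - (M : ℝ)⁻¹ := fun i j => by
    simp only [y, inner_sub_left, inner_sub_right, real_inner_smul_left, real_inner_smul_right,
      he, heo, hoe, hoo]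
    field_simp
    ring
  let K := (ℝ ∙ o)ᗮ
  have hyK : ∀ i, y i ∈ K := fun i => by
    rw [Submodule.mem_orthogonal_singleton_iff_inner_right, inner_sub_right,
      real_inner_smul_right, real_inner_comm, heo, hoo, inv_mul_cancel₀ (by positivity), sub_self]
  have hK : finrank ℝ K = M - 1 := by
    show finrank ℝ (ℝ ∙ o)ᗮ = M - 1
    have ho : o ≠ 0 := fun h => by rw [h, inner_zero_left] at hoo; linarith
    have := (ℝ ∙ o).finrank_add_finrank_orthogonal
    rw [finrank_span_singleton ho, finrank_euclideanSpace_fin] at this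
    omega
  obtain ⟨L⟩ := exists_linearIsometry_of_finrank_le (F := K) (E := E) (by rw [hK]; omega)
  let c := √((M : ℝ) / ((M : ℝ) - 1))
  have hc : c ^ 2 = M / ((M : ℝ) - 1) := sq_sqrt (div_nonneg (by positivity) (by linarith))
  let W : Fin M → E := fun i => L ⟨c • y i, K.smul_mem c (hyK i)⟩
  have hW : ∀ i j, ⟪W i, W j⟫ = c ^ 2 * ((if i = j then 1 else 0) - (M : ℝ)⁻¹) := fun i j => by
    simp only [W, L.inner_map_map, Submodule.coe_inner, real_inner_smul_left,
      real_inner_smul_right, hy]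
    ring
  refine ⟨W, fun i => ?_, fun i j hij => ?_⟩
  · have : ‖W i‖ ^ 2 = 1 := by
      rw [← real_inner_self_eq_norm_sq, hW, if_pos rfl, hc]
      field_simp
    exact (pow_eq_one_iff_of_nonneg (norm_nonneg _) two_ne_zero).1 this
  · rw [hW, if_neg hij, hc]
    field_simp
    ring

end InnerProduct

section Negatives

variable {E : Type*} [NormedAddCommGroup E] [InnerProductSpace ℝ E] {M : ℕ}

-- `inl j` indexes the cross-view negative `V j`, `inr j` the same-view negative `U j`.
def negatives (i : Fin M) : Finset (Fin M ⊕ Fin M) := (univ.erase i).disjSum (univ.erase i)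

def negLogit (τ : ℝ) (U V : Fin M → E) (i : Fin M) : Fin M ⊕ Fin M → ℝ :=
  Sum.elim (fun j => ⟪U i, V j⟫ / τ) (fun j => ⟪U i, U j⟫ / τ)

lemma card_negatives (i : Fin M) : (#(negatives i) : ℝ) = 2 * ((M : ℝ) - 1) := by
  rw [negatives, card_disjSum, card_erase_of_mem (mem_univ i), card_fin]
  push_cast [Nat.cast_sub i.pos]
  ring

lemma negatives_nonempty (hM : 1 < M) (i : Fin M) : (negatives i).Nonempty := by
  rw [← card_pos, negatives, card_disjSum, card_erase_of_mem (mem_univ i), card_fin]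
  omega

lemma sum_exp_negLogit (τ : ℝ) (U V : Fin M → E) (i : Fin M) :
    ∑ k ∈ negatives i, exp (negLogit τ U V i k) =
      ∑ j ∈ univ.erase i, exp (⟪U i, V j⟫ / τ) + ∑ j ∈ univ.erase i, exp (⟪U i, U j⟫ / τ) :=
  sum_disjSum _ _ _

lemma sum_negLogit (τ : ℝ) (U V : Fin M → E) (i : Fin M) :
    ∑ k ∈ negatives i, negLogit τ U V i k = ⟪U i, ∑ j ∈ univ.erase i, (U j + V j)⟫ / τ := by
  rw [negatives, sum_disjSum]
  simp only [negLogit, Sum.elim_inl, Sum.elim_inr, ← sum_div, ← add_div, ← inner_sum,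
    ← inner_add_right, sum_add_distrib, add_comm]

lemma sum_sum_negLogit_add (τ : ℝ) (U V : Fin M → E) :
    ∑ i, ∑ k ∈ negatives i, negLogit τ U V i k + ∑ i, ∑ k ∈ negatives i, negLogit τ V U i k =
      (‖∑ i, (U i + V i)‖ ^ 2 - ∑ i, ‖U i + V i‖ ^ 2) / τ := by
  simp only [sum_negLogit, ← sum_div, ← add_div, ← sum_add_distrib, ← inner_add_left,
    add_comm (V _) (U _)]
  rw [sum_inner_sum_erase (fun i => U i + V i)]

lemma inner_eq_of_logSumExpGap_eq_zero {τ : ℝ} (hM : 1 < M) (hτ : τ ≠ 0) {U : Fin M → E}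
    (hU : ∀ i, ‖U i‖ = 1) (hsum : ∑ j, U j = 0) {i j : Fin M}
    (h : logSumExpGap (negatives i) (negLogit τ U U i) = 0) (hij : i ≠ j) :
    ⟪U i, U j⟫ = -1 / ((M : ℝ) - 1) := by
  have hM' : (M : ℝ) - 1 ≠ 0 := by
    have : (1 : ℝ) < M := by exact_mod_cast hM
    linarith
  have hmean := eq_mean_of_logSumExpGap_eq_zero _ _ (negatives_nonempty hM i) h (Sum.inr j)
    (by simp [negatives, hij.symm])
  have hneg : ⟪U i, ∑ k ∈ univ.erase i, (U k + U k)⟫ = -2 := by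
    rw [sum_add_distrib, inner_add_right, inner_sum_erase_eq_neg_one hU hsum]
    norm_num
  rw [sum_negLogit, card_negatives, hneg] at hmean
  simp only [negLogit, Sum.elim_inr] at hmean
  field_simp at hmean ⊢
  linarith

end Negatives

section Loss

variable {d M : ℕ}

lemma mul_Ldcl (hM : 1 < M) (τ : ℝ) (U V : Fin M → EuclideanSpace ℝ (Fin d)) :
    M * Ldcl d M τ U V =
      ∑ i, (log (∑ k ∈ negatives i, exp (negLogit τ U V i k)) - ⟪U i, V i⟫ / τ) := by
  rw [Ldcl, ← mul_assoc, mul_one_div_cancel (by positivity), one_mul]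
  refine sum_congr rfl fun i _ => ?_
  have hpos := sum_pos (fun k _ => exp_pos (negLogit τ U V i k)) (negatives_nonempty hM i)
  rw [sum_exp_negLogit] at hpos ⊢
  rw [log_div (exp_ne_zero _) hpos.ne', log_exp]
  ring

def dclMin (M : ℕ) (τ : ℝ) : ℝ := log (2 * ((M : ℝ) - 1)) - 1 / τ - 1 / (((M : ℝ) - 1) * τ)

lemma two_mul_mul_LdclSym_sub_dclMin (hM : 1 < M) (τ : ℝ) (U V : Fin M → EuclideanSpace ℝ (Fin d))
    (hU : ∀ i, ‖U i‖ = 1) (hV : ∀ i, ‖V i‖ = 1) :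
    2 * M * (LdclSym d M τ U V - dclMin M τ) =
      ∑ i, logSumExpGap (negatives i) (negLogit τ U V i) +
        ∑ i, logSumExpGap (negatives i) (negLogit τ V U i) +
        ‖∑ i, (U i + V i)‖ ^ 2 / (2 * ((M : ℝ) - 1) * τ) +
        2 * (M - ∑ i, ⟪U i, V i⟫) * (1 / (2 * ((M : ℝ) - 1) * τ) + 1 / τ) := by
  have hUV := mul_Ldcl hM τ U V
  have hVU := mul_Ldcl hM τ V U
  have hsum := sum_sum_negLogit_add τ U V
  have hnorm : ∑ i, ‖U i + V i‖ ^ 2 = 2 * M + 2 * ∑ i, ⟪U i, V i⟫ := by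
    simp only [norm_add_sq_real, hU, hV, one_pow, sum_add_distrib, ← mul_sum, sum_const,
      card_univ, Fintype.card_fin, nsmul_eq_mul]
    ring
  rw [hnorm] at hsum
  simp only [real_inner_comm (U _) (V _)] at hVU
  simp only [logSumExpGap, card_negatives, sum_sub_distrib, sum_const, card_univ,
    Fintype.card_fin, nsmul_eq_mul, ← sum_div] at hUV hVU ⊢
  rw [LdclSym, dclMin]
  -- `ring` would expand `((M - 1) * τ)⁻¹` into `(M * τ - τ)⁻¹`; keep `M - 1` atomic
  generalize (M : ℝ) - 1 = n at *
  linear_combination hUV + hVU + hsum / (2 * n)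

lemma dclMin_le_LdclSym {τ : ℝ} (hM : 1 < M) (hτ : 0 < τ) (U V : Fin M → EuclideanSpace ℝ (Fin d))
    (hU : ∀ i, ‖U i‖ = 1) (hV : ∀ i, ‖V i‖ = 1) : dclMin M τ ≤ LdclSym d M τ U V := by
  have hM' : (1 : ℝ) < M := by exact_mod_cast hM
  have hgapUV := sum_nonneg fun i (_ : i ∈ univ) =>
    logSumExpGap_nonneg _ (negLogit τ U V i) (negatives_nonempty hM i)
  have hgapVU := sum_nonneg fun i (_ : i ∈ univ) =>
    logSumExpGap_nonneg _ (negLogit τ V U i) (negatives_nonempty hM i)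
  have hA : 0 ≤ (M : ℝ) - ∑ i, ⟪U i, V i⟫ := sub_nonneg.2 (by simpa using sum_inner_le_card hU hV)
  have hn : 0 < (M : ℝ) - 1 := by linarith
  have h := two_mul_mul_LdclSym_sub_dclMin hM τ U V hU hV
  rw [← sub_nonneg, ← mul_nonneg_iff_of_pos_left (by positivity : (0 : ℝ) < 2 * M), h]
  positivity

lemma vanishing_of_LdclSym_eq_dclMin {τ : ℝ} (hM : 1 < M) (hτ : 0 < τ)
    {U V : Fin M → EuclideanSpace ℝ (Fin d)} (hU : ∀ i, ‖U i‖ = 1) (hV : ∀ i, ‖V i‖ = 1)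
    (h : LdclSym d M τ U V = dclMin M τ) :
    ∑ i, logSumExpGap (negatives i) (negLogit τ U V i) = 0 ∧ ∑ i, (U i + V i) = 0 ∧
      ∑ i, ⟪U i, V i⟫ = M := by
  have hM' : (1 : ℝ) < M := by exact_mod_cast hM
  have hden : 0 < 2 * ((M : ℝ) - 1) * τ := mul_pos (by linarith) hτ
  have hc : 0 < 1 / (2 * ((M : ℝ) - 1) * τ) + 1 / τ := by positivity
  have hgapUV := sum_nonneg fun i (_ : i ∈ univ) =>
    logSumExpGap_nonneg _ (negLogit τ U V i) (negatives_nonempty hM i)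
  have hgapVU := sum_nonneg fun i (_ : i ∈ univ) =>
    logSumExpGap_nonneg _ (negLogit τ V U i) (negatives_nonempty hM i)
  have hS : 0 ≤ ‖∑ i, (U i + V i)‖ ^ 2 / (2 * ((M : ℝ) - 1) * τ) := by positivity
  have hA : 0 ≤ (M : ℝ) - ∑ i, ⟪U i, V i⟫ := sub_nonneg.2 (by simpa using sum_inner_le_card hU hV)
  have hid := two_mul_mul_LdclSym_sub_dclMin hM τ U V hU hV
  rw [h, sub_self, mul_zero] at hid
  have hA0 : ((M : ℝ) - ∑ i, ⟪U i, V i⟫) * (1 / (2 * ((M : ℝ) - 1) * τ) + 1 / τ) = 0 := by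
    nlinarith
  have hS0 : ‖∑ i, (U i + V i)‖ ^ 2 / (2 * ((M : ℝ) - 1) * τ) = 0 := by nlinarith
  refine ⟨by nlinarith, ?_, by linarith [(mul_eq_zero.1 hA0).resolve_right hc.ne']⟩
  simpa [hden.ne'] using hS0

lemma eq_of_LdclSym_eq_dclMin {τ : ℝ} (hM : 1 < M) (hτ : 0 < τ)
    {U V : Fin M → EuclideanSpace ℝ (Fin d)} (hU : ∀ i, ‖U i‖ = 1) (hV : ∀ i, ‖V i‖ = 1)
    (h : LdclSym d M τ U V = dclMin M τ) :
    (∀ i, U i = V i) ∧ ∀ i j, i ≠ j → ⟪U i, U j⟫ = -1 / ((M : ℝ) - 1) := by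
  obtain ⟨hgap, hS, hA⟩ := vanishing_of_LdclSym_eq_dclMin hM hτ hU hV h
  have hUV : ∀ i, U i = V i := eq_of_sum_inner_eq_card hU hV (by rwa [Fintype.card_fin])
  refine ⟨hUV, fun i j hij => ?_⟩
  obtain rfl : V = U := (funext hUV).symm
  have hsum : ∑ i, V i = 0 := by
    rwa [sum_add_distrib, ← two_smul ℝ, smul_eq_zero, or_iff_right two_ne_zero] at hS
  refine inner_eq_of_logSumExpGap_eq_zero hM hτ.ne' hV hsum ?_ hij
  exact (sum_eq_zero_iff_of_nonneg fun i _ => logSumExpGap_nonneg _ _ (negatives_nonempty hM i)).1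
    hgap i (mem_univ i)

lemma Ldcl_self_of_simplex (hM : 1 < M) (τ : ℝ) {U : Fin M → EuclideanSpace ℝ (Fin d)}
    (hU : ∀ i, ‖U i‖ = 1) (hsimplex : ∀ i j, i ≠ j → ⟪U i, U j⟫ = -1 / ((M : ℝ) - 1)) :
    Ldcl d M τ U U = dclMin M τ := by
  have hM' : (1 : ℝ) < M := by exact_mod_cast hM
  have hlogit : ∀ i, ∀ k ∈ negatives i, negLogit τ U U i k = -1 / ((M : ℝ) - 1) / τ := by
    rintro i (j | j) hk <;> simp only [negatives, inl_mem_disjSum, inr_mem_disjSum, mem_erase] at hk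
      <;> simp [negLogit, hsimplex i j (Ne.symm hk.1)]
  have hterm : ∀ i, log (∑ k ∈ negatives i, exp (negLogit τ U U i k)) - ⟪U i, U i⟫ / τ =
      dclMin M τ := fun i => by
    rw [sum_congr rfl fun k hk => congrArg exp (hlogit i k hk), sum_const, nsmul_eq_mul,
      card_negatives, log_mul (by linarith) (exp_ne_zero _), log_exp,
      real_inner_self_eq_norm_sq, hU, dclMin]
    field_simp
    ring
  apply mul_left_cancel₀ (by positivity : (M : ℝ) ≠ 0)
  rw [mul_Ldcl hM, sum_congr rfl fun i _ => hterm i]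
  simp

lemma LdclSym_self_of_simplex (hM : 1 < M) (τ : ℝ) {U : Fin M → EuclideanSpace ℝ (Fin d)}
    (hU : ∀ i, ‖U i‖ = 1) (hsimplex : ∀ i j, i ≠ j → ⟪U i, U j⟫ = -1 / ((M : ℝ) - 1)) :
    LdclSym d M τ U U = dclMin M τ := by
  rw [LdclSym, Ldcl_self_of_simplex hM τ hU hsimplex, add_self_div_two]

end Loss

theorem stmt_4 (d M : ℕ) (hM : 1 < M) (hMd : M ≤ d + 1) (τ : ℝ) (hτ : 0 < τ) :
    ∀ U V : Fin M → EuclideanSpace ℝ (Fin d),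
      (∀ i, ‖U i‖ = 1) → (∀ i, ‖V i‖ = 1) →
      ((∀ U' V' : Fin M → EuclideanSpace ℝ (Fin d),
          (∀ i, ‖U' i‖ = 1) → (∀ i, ‖V' i‖ = 1) →
          LdclSym d M τ U V ≤ LdclSym d M τ U' V') ↔
        ((∀ i, U i = V i) ∧
          ∀ i j, i ≠ j → ⟪U i, U j⟫ = -1 / ((M : ℝ) - 1))) := by
  intro U V hU hV
  constructor
  · intro hmin
    obtain ⟨W, hW, hsimplex⟩ := exists_regular_simplex (E := EuclideanSpace ℝ (Fin d)) hM
      (by rwa [finrank_euclideanSpace_fin])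
    have hle : LdclSym d M τ U V ≤ dclMin M τ :=
      (hmin W W hW hW).trans_eq (LdclSym_self_of_simplex hM τ hW hsimplex)
    exact eq_of_LdclSym_eq_dclMin hM hτ hU hV (hle.antisymm (dclMin_le_LdclSym hM hτ U V hU hV))
  · rintro ⟨hUV, hsimplex⟩ U' V' hU' hV'
    obtain rfl : V = U := (funext hUV).symm
    rw [LdclSym_self_of_simplex hM τ hV hsimplex]
    exact dclMin_le_LdclSym hM hτ U' V' hU' hV'
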